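/- Let u be subharmonic on ℂ and define u_r(w) = ⨍_{D(w,r)} u dA. Then u_r is subharmonic, u ≤ u_r, and if additionally the distributional Laplacian of u satisfies Δu ≤ C (as a measure, against Lebesgue), then u_r(w) − u(w) ≤ C r²/4 for all w, so e^{-u} and e^{-u_r} define equivalent weights with constants depending only on C and r. -/

import Mathlib

open MeasureTheory Metric

/-- A continuous function on `ℂ` is subharmonic if it satisfies the sub-mean value
inequality on every disc. -/
def Subharmonic (u : ℂ → ℝ) : Prop :=
  Continuous u ∧ ∀ w : ℂ, ∀ s : ℝ, 0 < s → u w ≤ ⨍ z in ball w s, u z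

-- integrability of continuous function on ball
lemma intOn_ball (f : ℂ → ℝ) (hf : Continuous f) (w : ℂ) (s : ℝ) :
    IntegrableOn f (ball w s) := by
  exact ((hf.continuousOn).integrableOn_compact (isCompact_closedBall w s)).mono_set
    ball_subset_closedBall

-- translation of set integral over ball
lemma int_ball_translate (f : ℂ → ℝ) (hf : Continuous f) (w : ℂ) (s : ℝ) :
    ∫ z in ball w s, f z = ∫ y in ball 0 s, f (w + y) := by
  have hmap : Measure.map (fun y : ℂ => w + y) volume = volume :=
    map_add_left_eq_self volume w
  have hpre : (fun y : ℂ => w + y) ⁻¹' ball w s = ball 0 s := by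
    ext y; simp [mem_ball, dist_eq_norm]
  calc ∫ z in ball w s, f z
      = ∫ z in ball w s, f z ∂(Measure.map (fun y : ℂ => w + y) volume) := by rw [hmap]
    _ = ∫ y in (fun y : ℂ => w + y) ⁻¹' ball w s, f (w + y) := by
        exact setIntegral_map measurableSet_ball
          (by rw [hmap]; exact hf.aestronglyMeasurable)
          (measurable_const_add w).aemeasurable
    _ = ∫ y in ball 0 s, f (w + y) := by rw [hpre]

lemma avg_ball_translate (f : ℂ → ℝ) (hf : Continuous f) (w : ℂ) (s : ℝ) :
    ⨍ z in ball w s, f z = ⨍ y in ball 0 s, f (w + y) := by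
  rw [setAverage_eq, setAverage_eq, int_ball_translate f hf w s,
    measureReal_def, measureReal_def, Measure.addHaar_ball_center]

-- odd function integrates to zero on ball centered at 0
lemma int_odd_zero (g : ℂ → ℝ) (hg : Continuous g) (hodd : ∀ y, g (-y) = - g y)
    (s : ℝ) : ∫ y in ball (0:ℂ) s, g y = 0 := by
  have hball : ∀ x : ℂ, -x ∈ ball (0:ℂ) s ↔ x ∈ ball (0:ℂ) s := by
    intro x; simp [mem_ball, dist_eq_norm]
  have h1 : ∫ y in ball (0:ℂ) s, g y
      = ∫ y, (ball (0:ℂ) s).indicator g y := by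
    rw [integral_indicator measurableSet_ball]
  have h2 : ∫ y, (ball (0:ℂ) s).indicator g y
      = ∫ y, (ball (0:ℂ) s).indicator g (-y) := (integral_neg_eq_self _ _).symm
  have h3 : ∀ y, (ball (0:ℂ) s).indicator g (-y)
      = - (ball (0:ℂ) s).indicator g y := by
    intro y
    by_cases hy : y ∈ ball (0:ℂ) s
    · rw [Set.indicator_of_mem hy, Set.indicator_of_mem ((hball y).2 hy), hodd]
    · rw [Set.indicator_of_notMem hy, Set.indicator_of_notMem
        (fun h => hy ((hball y).1 h)), neg_zero]
  have h4 : ∫ y, (ball (0:ℂ) s).indicator g (-y) = - ∫ y in ball (0:ℂ) s, g y := by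
    simp only [h3]; rw [integral_neg, h1]
  linarith [h1, h2, h4]


lemma ball_vol_pos (w : ℂ) (s : ℝ) (hs : 0 < s) :
    0 < (volume (ball w s)).toReal :=
  ENNReal.toReal_pos (measure_ball_pos volume w hs).ne' measure_ball_lt_top.ne

lemma avg_normsq_le (w : ℂ) (r : ℝ) (hr : 0 < r) :
    (⨍ z in ball w r, ‖z‖ ^ 2) ≤ ‖w‖ ^ 2 + r ^ 2 := by
  have hcont : Continuous (fun z : ℂ => ‖z‖ ^ 2) := by continuity
  rw [avg_ball_translate _ hcont w r]
  set g : ℂ → ℝ := fun y => 2 * (w.re * y.re + w.im * y.im) with hgdef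
  have hgc : Continuous g := by
    apply Continuous.mul continuous_const
    exact ((continuous_const.mul Complex.continuous_re).add
      (continuous_const.mul Complex.continuous_im))
  have key : ∀ y : ℂ, ‖w + y‖ ^ 2 = ‖w‖ ^ 2 + g y + ‖y‖ ^ 2 := by
    intro y
    simp only [hgdef, Complex.sq_norm, Complex.normSq_apply,
      Complex.add_re, Complex.add_im]
    ring
  have hV : 0 < (volume (ball (0:ℂ) r)).toReal := ball_vol_pos 0 r hr
  have i2 : IntegrableOn g (ball (0:ℂ) r) := intOn_ball _ hgc 0 r
  have i3 : IntegrableOn (fun y : ℂ => ‖y‖ ^ 2) (ball (0:ℂ) r) := intOn_ball _ hcont 0 r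
  have ic : IntegrableOn (fun _ : ℂ => ‖w‖ ^ 2) (ball (0:ℂ) r) :=
    integrableOn_const measure_ball_lt_top.ne
  have isum : (∫ y in ball (0:ℂ) r, ‖w + y‖ ^ 2)
      = (∫ _y in ball (0:ℂ) r, ‖w‖ ^ 2) + (∫ y in ball (0:ℂ) r, g y)
        + ∫ y in ball (0:ℂ) r, ‖y‖ ^ 2 := by
    simp only [key]
    have iadd : IntegrableOn (fun y : ℂ => ‖w‖ ^ 2 + g y) (ball (0:ℂ) r) :=
      intOn_ball _ (continuous_const.add hgc) 0 r
    rw [integral_add iadd i3, integral_add ic i2]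
  have hzero : (∫ y in ball (0:ℂ) r, g y) = 0 := by
    apply int_odd_zero g hgc _ r
    intro y; simp only [hgdef, Complex.neg_re, Complex.neg_im]; ring
  have hconst : (∫ _y in ball (0:ℂ) r, ‖w‖ ^ 2)
      = (volume (ball (0:ℂ) r)).toReal * ‖w‖ ^ 2 := by
    rw [setIntegral_const, smul_eq_mul, measureReal_def]
  have hbnd : (∫ y in ball (0:ℂ) r, ‖y‖ ^ 2)
      ≤ (volume (ball (0:ℂ) r)).toReal * r ^ 2 := by
    have : (∫ y in ball (0:ℂ) r, ‖y‖ ^ 2) ≤ ∫ _y in ball (0:ℂ) r, r ^ 2 := by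
      apply setIntegral_mono_on i3 (integrableOn_const measure_ball_lt_top.ne)
        measurableSet_ball
      intro y hy
      have : ‖y‖ < r := by simpa [mem_ball, dist_eq_norm] using hy
      exact pow_le_pow_left₀ (norm_nonneg y) this.le 2
    rwa [setIntegral_const, smul_eq_mul, measureReal_def] at this
  rw [setAverage_eq, smul_eq_mul]
  set V := (volume (ball (0:ℂ) r)).toReal
  rw [isum, hzero, hconst, add_zero]
  have h1 : V⁻¹ * (V * ‖w‖ ^ 2 + ∫ y in ball (0:ℂ) r, ‖y‖ ^ 2)
      ≤ V⁻¹ * (V * ‖w‖ ^ 2 + V * r ^ 2) := by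
    apply mul_le_mul_of_nonneg_left _ (inv_nonneg.2 hV.le)
    linarith
  calc V⁻¹ * (V * ‖w‖ ^ 2 + ∫ y in ball (0:ℂ) r, ‖y‖ ^ 2)
      ≤ V⁻¹ * (V * ‖w‖ ^ 2 + V * r ^ 2) := h1
    _ = ‖w‖ ^ 2 + r ^ 2 := by field_simp

lemma part3 (u : ℂ → ℝ) (hu : Subharmonic u) (r : ℝ) (hr : 0 < r)
    (C : ℝ) (hC : 0 ≤ C) (hv : Subharmonic (fun z => C * ‖z‖ ^ 2 / 4 - u z)) (w : ℂ) :
    (⨍ z in ball w r, u z) - u w ≤ C * r ^ 2 / 4 := by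
  have h := hv.2 w r hr
  have hA : (⨍ z in ball w r, (C * ‖z‖ ^ 2 / 4 - u z))
      = C / 4 * (⨍ z in ball w r, ‖z‖ ^ 2) - ⨍ z in ball w r, u z := by
    rw [setAverage_eq, setAverage_eq, setAverage_eq, smul_eq_mul, smul_eq_mul, smul_eq_mul]
    have i1 : IntegrableOn (fun z : ℂ => C * ‖z‖ ^ 2 / 4) (ball w r) :=
      intOn_ball _ (by continuity) w r
    have i2 : IntegrableOn u (ball w r) := intOn_ball _ hu.1 w r
    rw [integral_sub i1 i2]
    have : (∫ z in ball w r, C * ‖z‖ ^ 2 / 4) = C / 4 * ∫ z in ball w r, ‖z‖ ^ 2 := by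
      rw [← integral_const_mul]
      congr 1; funext z; ring
    rw [this]; ring
  rw [hA] at h
  have hB : C / 4 * (⨍ z in ball w r, ‖z‖ ^ 2) ≤ C / 4 * (‖w‖ ^ 2 + r ^ 2) :=
    mul_le_mul_of_nonneg_left (avg_normsq_le w r hr) (by linarith)
  nlinarith [h, hB]

lemma ur_rep (u : ℂ → ℝ) (hu : Continuous u) (r : ℝ) (z : ℂ) :
    (⨍ x in ball z r, u x)
      = (volume (ball (0:ℂ) r)).toReal⁻¹ * ∫ y in ball (0:ℂ) r, u (z + y) := by
  rw [avg_ball_translate u hu z r, setAverage_eq, smul_eq_mul, measureReal_def]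

lemma ur_continuous (u : ℂ → ℝ) (hu : Continuous u) (r : ℝ) :
    Continuous (fun w => ⨍ z in ball w r, u z) := by
  have : (fun w => ⨍ z in ball w r, u z)
      = fun w => (volume (ball (0:ℂ) r)).toReal⁻¹ * ∫ y in ball (0:ℂ) r, u (w + y) := by
    funext w; exact ur_rep u hu r w
  rw [this]
  apply continuous_const.mul
  rw [continuous_iff_continuousAt]
  intro x₀
  obtain ⟨M, hM⟩ := (isCompact_closedBall x₀ (1 + |r|)).exists_bound_of_continuousOn
    hu.continuousOn
  apply continuousAt_of_dominated (bound := fun _ => M)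
  · exact Filter.Eventually.of_forall fun w =>
      ((hu.comp (continuous_const.add continuous_id)).aestronglyMeasurable).restrict
  · filter_upwards [ball_mem_nhds x₀ one_pos] with w hw
    refine (ae_restrict_iff' measurableSet_ball).2 (ae_of_all _ fun y hy => ?_)
    apply hM
    have h1 : dist (w + y) x₀ ≤ dist (w + y) w + dist w x₀ := dist_triangle _ _ _
    have h2 : dist (w + y) w = ‖y‖ := by simp [dist_eq_norm]
    have h3 : ‖y‖ < r := by simpa [mem_ball, dist_eq_norm] using hy
    have h4 : dist w x₀ < 1 := mem_ball.1 hw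
    have h5 : r ≤ |r| := le_abs_self r
    simp only [mem_closedBall]
    linarith
  · exact integrableOn_const measure_ball_lt_top.ne
  · exact ae_of_all _ fun y => (hu.comp (continuous_id.add continuous_const)).continuousAt

lemma ur_submean (u : ℂ → ℝ) (hu : Subharmonic u) (r : ℝ) (hr : 0 < r)
    (w : ℂ) (s : ℝ) (hs : 0 < s) :
    (⨍ z in ball w r, u z) ≤ ⨍ z in ball w s, (⨍ x in ball z r, u x) := by
  set c : ℝ := (volume (ball (0:ℂ) r)).toReal⁻¹ with hc
  have hc0 : 0 ≤ c := inv_nonneg.2 ENNReal.toReal_nonneg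
  set V : ℝ := (volume (ball w s)).toReal with hVdef
  have hV : 0 < V := ball_vol_pos w s hs
  set G : ℂ → ℝ := fun y => ∫ z in ball w s, u (z + y) with hGdef
  -- pointwise lower bound for G
  have stepA : ∀ y : ℂ, V * u (w + y) ≤ G y := by
    intro y
    have h := hu.2 (w + y) s hs
    have e1 : (∫ z in ball (w + y) s, u z) = ∫ x in ball (0:ℂ) s, u (w + y + x) :=
      int_ball_translate u hu.1 (w + y) s
    have e2 : G y = ∫ x in ball (0:ℂ) s, u (w + x + y) :=
      int_ball_translate (fun z => u (z + y)) (hu.1.comp (continuous_id.add continuous_const)) w s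
    have e3 : (∫ x in ball (0:ℂ) s, u (w + y + x)) = ∫ x in ball (0:ℂ) s, u (w + x + y) := by
      congr 1; funext x; rw [show w + y + x = w + x + y by ring]
    have e4 : (volume (ball (w + y) s)).toReal = V := by
      rw [hVdef, Measure.addHaar_ball_center volume (w + y), Measure.addHaar_ball_center volume w]
    rw [setAverage_eq, smul_eq_mul, measureReal_def, e4, e1, e3, ← e2] at h
    calc V * u (w + y) ≤ V * (V⁻¹ * G y) := mul_le_mul_of_nonneg_left h hV.le
      _ = G y := by field_simp
  -- Fubini
  have hcontp : Continuous (fun p : ℂ × ℂ => u (p.1 + p.2)) :=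
    hu.1.comp (continuous_fst.add continuous_snd)
  have hint : Integrable (fun p : ℂ × ℂ => u (p.1 + p.2))
      ((volume.restrict (ball w s)).prod (volume.restrict (ball (0:ℂ) r))) := by
    rw [Measure.prod_restrict]
    apply IntegrableOn.mono_set
      (hcontp.continuousOn.integrableOn_compact
        ((isCompact_closedBall w s).prod (isCompact_closedBall (0:ℂ) r)))
    exact Set.prod_mono ball_subset_closedBall ball_subset_closedBall
  have fub : (∫ z in ball w s, ∫ y in ball (0:ℂ) r, u (z + y))
      = ∫ y in ball (0:ℂ) r, G y :=
    integral_integral_swap (f := fun z y => u (z + y)) hint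
  have hGint : Integrable G (volume.restrict (ball (0:ℂ) r)) :=
    hint.integral_prod_right
  have hlow : Integrable (fun y : ℂ => V * u (w + y)) (volume.restrict (ball (0:ℂ) r)) :=
    (intOn_ball (fun y => u (w + y))
      (hu.1.comp (continuous_const.add continuous_id)) 0 r).const_mul V
  have stepD : (∫ y in ball (0:ℂ) r, V * u (w + y)) ≤ ∫ y in ball (0:ℂ) r, G y :=
    integral_mono hlow hGint stepA
  -- assemble
  have lhs_eq : (⨍ z in ball w r, u z) = c * ∫ y in ball (0:ℂ) r, u (w + y) :=
    ur_rep u hu.1 r w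
  have rhs_eq : (⨍ z in ball w s, (⨍ x in ball z r, u x))
      = V⁻¹ * (c * ∫ y in ball (0:ℂ) r, G y) := by
    rw [setAverage_eq, smul_eq_mul, measureReal_def, ← hVdef]
    congr 1
    have : (∫ z in ball w s, ⨍ x in ball z r, u x)
        = ∫ z in ball w s, c * ∫ y in ball (0:ℂ) r, u (z + y) := by
      congr 1; funext z; exact ur_rep u hu.1 r z
    rw [this, integral_const_mul, fub]
  rw [lhs_eq, rhs_eq]
  have e5 : (∫ y in ball (0:ℂ) r, V * u (w + y)) = V * ∫ y in ball (0:ℂ) r, u (w + y) :=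
    integral_const_mul V _
  rw [e5] at stepD
  calc c * ∫ y in ball (0:ℂ) r, u (w + y)
      = V⁻¹ * (c * (V * ∫ y in ball (0:ℂ) r, u (w + y))) := by field_simp
    _ ≤ V⁻¹ * (c * ∫ y in ball (0:ℂ) r, G y) := by
        apply mul_le_mul_of_nonneg_left _ (inv_nonneg.2 hV.le)
        exact mul_le_mul_of_nonneg_left stepD hc0

/-- One-variable case of Lemma 1.1 of [PV] (Remark 2.4): for `u` subharmonic on `ℂ` and
`u_r(w) = ⨍_{D(w,r)} u dA`, the function `u_r` is subharmonic, `u ≤ u_r`, and if moreover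
`Δu ≤ C` (encoded: `z ↦ C|z|²/4 - u(z)` is subharmonic), then `u_r - u ≤ C r²/4`. -/
theorem stmt_13 (u : ℂ → ℝ) (hu : Subharmonic u) (r : ℝ) (hr : 0 < r) :
    Subharmonic (fun w => ⨍ z in ball w r, u z) ∧
      (∀ w : ℂ, u w ≤ ⨍ z in ball w r, u z) ∧
      (∀ C : ℝ, 0 ≤ C → Subharmonic (fun z => C * ‖z‖ ^ 2 / 4 - u z) →
        ∀ w : ℂ, (⨍ z in ball w r, u z) - u w ≤ C * r ^ 2 / 4) := by
  refine ⟨⟨ur_continuous u hu.1 r, fun w s hs => ur_submean u hu r hr w s hs⟩,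
    fun w => hu.2 w r hr, fun C hC hv w => part3 u hu r hr C hC hv w⟩
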